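/- If the system is globally solvable at the Fourier coefficient level, then for every ε > 0 there exists C > 0 such that ‖σ(τ,j)‖ ≥ C·exp(−ε·w(τ,j)) for all (τ,j) ∈ ℤ^m×ℕ with ‖σ(τ,j)‖ ≠ 0. -/

import Mathlib

open Real

/-- Euclidean norm of an integer vector `τ ∈ ℤ^m`. -/
noncomputable def eNormZ {m : ℕ} (τ : Fin m → ℤ) : ℝ :=
  Real.sqrt (∑ i, ((τ i : ℝ)) ^ 2)

/-- The weight `w(τ,j) = ‖τ‖^(1/σ) + j^(1/(2nμ))`. -/
noncomputable def wgt (m n : ℕ) (σ μ : ℝ) (τ : Fin m → ℤ) (j : ℕ) : ℝ :=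
  eNormZ τ ^ (1 / σ) + (j : ℝ) ^ (1 / (2 * n * μ))

/-- GS-decay: `|a(τ,j)| ≤ C exp(-ε w(τ,j))` for some `C, ε > 0`. -/
def GSDecay (m n : ℕ) (σ μ : ℝ) (a : (Fin m → ℤ) → ℕ → ℂ) : Prop :=
  ∃ C > 0, ∃ ε > 0, ∀ τ j, ‖a τ j‖ ≤ C * Real.exp (-ε * wgt m n σ μ τ j)

/-- GS-growth: for all `ε > 0` there is `C > 0` with `|a(τ,j)| ≤ C exp(ε w(τ,j))`. -/
def GSGrowth (m n : ℕ) (σ μ : ℝ) (a : (Fin m → ℤ) → ℕ → ℂ) : Prop :=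
  ∀ ε > 0, ∃ C > 0, ∀ τ j, ‖a τ j‖ ≤ C * Real.exp (ε * wgt m n σ μ τ j)

/-- Symbol of the operator `L_r = Q_r(D_t) + d_r P(x,D_x)`: `σ_r(τ,j) = Q_r(τ) + d_r λ_j`. -/
noncomputable def symb {m ℓ : ℕ} (Q : Fin ℓ → MvPolynomial (Fin m) ℂ)
    (d : Fin ℓ → ℂ) (lam : ℕ → ℝ) (r : Fin ℓ) (τ : Fin m → ℤ) (j : ℕ) : ℂ :=
  MvPolynomial.eval (fun i => ((τ i : ℂ))) (Q r) + d r * (lam j : ℂ)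

/-- `‖σ(τ,j)‖ = max_{1 ≤ r ≤ ℓ} |σ_r(τ,j)|`. -/
noncomputable def symbNorm {m ℓ : ℕ} (Q : Fin ℓ → MvPolynomial (Fin m) ℂ)
    (d : Fin ℓ → ℂ) (lam : ℕ → ℝ) (τ : Fin m → ℤ) (j : ℕ) : ℝ :=
  ⨆ r : Fin ℓ, ‖symb Q d lam r τ j‖

/-- The Diophantine condition (DC). -/
def DioCond (m n ℓ : ℕ) (σ μ : ℝ) (Q : Fin ℓ → MvPolynomial (Fin m) ℂ)
    (d : Fin ℓ → ℂ) (lam : ℕ → ℝ) : Prop :=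
  ∀ ε > 0, ∃ C > 0, ∀ τ j, symbNorm Q d lam τ j ≠ 0 →
    symbNorm Q d lam τ j ≥ C * Real.exp (-ε * wgt m n σ μ τ j)

/-- Global hypoellipticity at the Fourier coefficient level. -/
def GloballyHypoelliptic (m n ℓ : ℕ) (σ μ : ℝ) (Q : Fin ℓ → MvPolynomial (Fin m) ℂ)
    (d : Fin ℓ → ℂ) (lam : ℕ → ℝ) : Prop :=
  ∀ u : (Fin m → ℤ) → ℕ → ℂ, GSGrowth m n σ μ u →
    (∀ r : Fin ℓ, GSDecay m n σ μ (fun τ j => symb Q d lam r τ j * u τ j)) →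
    GSDecay m n σ μ u

/-- Admissible families (compatibility conditions). -/
def Admissible {m ℓ : ℕ} (Q : Fin ℓ → MvPolynomial (Fin m) ℂ) (d : Fin ℓ → ℂ)
    (lam : ℕ → ℝ) (f : Fin ℓ → (Fin m → ℤ) → ℕ → ℂ) : Prop :=
  (∀ r s τ j, symb Q d lam r τ j * f s τ j = symb Q d lam s τ j * f r τ j) ∧
  (∀ r τ j, symb Q d lam r τ j = 0 → f r τ j = 0)

/-- Global solvability at the Fourier coefficient level. -/
def GloballySolvable (m n ℓ : ℕ) (σ μ : ℝ) (Q : Fin ℓ → MvPolynomial (Fin m) ℂ)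
    (d : Fin ℓ → ℂ) (lam : ℕ → ℝ) : Prop :=
  ∀ f : Fin ℓ → (Fin m → ℤ) → ℕ → ℂ, Admissible Q d lam f →
    (∀ r, GSGrowth m n σ μ (f r)) →
    ∃ u : (Fin m → ℤ) → ℕ → ℂ, GSGrowth m n σ μ u ∧
      ∀ r τ j, symb Q d lam r τ j * u τ j = f r τ j

/-!
Feed the solvability hypothesis the admissible family `f_r = σ_r · e^{-εw/2} / ‖σ‖`, which is
bounded by `1`. Any solution `u` must equal `e^{-εw/2} / ‖σ‖` wherever `‖σ‖ ≠ 0`, and the growth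
bound `|u| ≤ C e^{εw/2}` then rearranges to `‖σ‖ ≥ C⁻¹ e^{-εw}`.
-/

lemma wgt_nonneg (m n : ℕ) (σ μ : ℝ) (τ : Fin m → ℤ) (j : ℕ) : 0 ≤ wgt m n σ μ τ j :=
  add_nonneg (rpow_nonneg (sqrt_nonneg _) _) (rpow_nonneg (Nat.cast_nonneg _) _)

lemma GSGrowth.of_norm_le {m n : ℕ} {σ μ M : ℝ} {a : (Fin m → ℤ) → ℕ → ℂ} (hM : 0 < M)
    (h : ∀ τ j, ‖a τ j‖ ≤ M) : GSGrowth m n σ μ a := fun _ hε =>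
  ⟨M, hM, fun τ j => (h τ j).trans <|
    le_mul_of_one_le_right hM.le (one_le_exp (mul_nonneg hε.le (wgt_nonneg m n σ μ τ j)))⟩

section Symbol

variable {m ℓ : ℕ} (Q : Fin ℓ → MvPolynomial (Fin m) ℂ) (d : Fin ℓ → ℂ) (lam : ℕ → ℝ)

lemma norm_symb_le_symbNorm (r : Fin ℓ) (τ : Fin m → ℤ) (j : ℕ) :
    ‖symb Q d lam r τ j‖ ≤ symbNorm Q d lam τ j :=
  le_ciSup (f := fun r => ‖symb Q d lam r τ j‖) (Set.finite_range _).bddAbove r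

lemma symbNorm_nonneg (τ : Fin m → ℤ) (j : ℕ) : 0 ≤ symbNorm Q d lam τ j :=
  Real.iSup_nonneg fun _ => norm_nonneg _

lemma exists_symb_ne_zero_of_symbNorm_ne_zero {τ : Fin m → ℤ} {j : ℕ}
    (h : symbNorm Q d lam τ j ≠ 0) : ∃ r, symb Q d lam r τ j ≠ 0 := by
  by_contra! hzero
  exact h (by simp [symbNorm, hzero])

lemma admissible_symb_mul (g : (Fin m → ℤ) → ℕ → ℂ) :
    Admissible Q d lam (fun r τ j => symb Q d lam r τ j * g τ j) :=
  ⟨fun _ _ _ _ => by ring, fun _ _ _ h => by simp [h]⟩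

lemma norm_symb_mul_div_symbNorm_le {x : ℝ} (hx : 0 ≤ x) (r : Fin ℓ) (τ : Fin m → ℤ) (j : ℕ) :
    ‖symb Q d lam r τ j * ((x / symbNorm Q d lam τ j : ℝ) : ℂ)‖ ≤ x := by
  have hN := symbNorm_nonneg Q d lam τ j
  rw [norm_mul, Complex.norm_real, Real.norm_of_nonneg (div_nonneg hx hN)]
  rcases hN.eq_or_lt with hN0 | hNpos
  · simp [← hN0, hx]
  · calc ‖symb Q d lam r τ j‖ * (x / symbNorm Q d lam τ j)
        ≤ symbNorm Q d lam τ j * (x / symbNorm Q d lam τ j) := by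
          gcongr; exact norm_symb_le_symbNorm Q d lam r τ j
      _ = x := mul_div_cancel₀ x hNpos.ne'

end Symbol

lemma GloballySolvable.exists_eq_of_symbNorm_ne_zero {m n ℓ : ℕ} {σ μ : ℝ}
    {Q : Fin ℓ → MvPolynomial (Fin m) ℂ} {d : Fin ℓ → ℂ} {lam : ℕ → ℝ}
    (hGS : GloballySolvable m n ℓ σ μ Q d lam) (g : (Fin m → ℤ) → ℕ → ℂ)
    (hg : ∀ r, GSGrowth m n σ μ (fun τ j => symb Q d lam r τ j * g τ j)) :
    ∃ u, GSGrowth m n σ μ u ∧ ∀ τ j, symbNorm Q d lam τ j ≠ 0 → u τ j = g τ j := by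
  obtain ⟨u, hu, hsol⟩ := hGS _ (admissible_symb_mul Q d lam g) hg
  refine ⟨u, hu, fun τ j hN => ?_⟩
  obtain ⟨r, hr⟩ := exists_symb_ne_zero_of_symbNorm_ne_zero Q d lam hN
  exact mul_left_cancel₀ hr (hsol r τ j)

lemma inv_mul_exp_le_of_exp_div_le {N C δ w : ℝ} (hN : 0 < N) (hC : 0 < C)
    (h : exp (-δ * w) / N ≤ C * exp (δ * w)) : C⁻¹ * exp (-(2 * δ) * w) ≤ N := by
  have hsplit : exp (-(2 * δ) * w) = exp (-δ * w) / exp (δ * w) := by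
    rw [← exp_sub]; ring_nf
  rw [inv_mul_le_iff₀ hC, hsplit, div_le_iff₀ (exp_pos _)]
  rw [div_le_iff₀ hN] at h
  linarith

theorem statement5_general (m n ℓ : ℕ)
    (σ μ : ℝ)
    (Q : Fin ℓ → MvPolynomial (Fin m) ℂ) (d : Fin ℓ → ℂ) (lam : ℕ → ℝ)
    (hGS : GloballySolvable m n ℓ σ μ Q d lam) :
    ∀ ε > 0, ∃ C > 0, ∀ τ j, symbNorm Q d lam τ j ≠ 0 →
      symbNorm Q d lam τ j ≥ C * Real.exp (-ε * wgt m n σ μ τ j) := by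
  intro ε hε
  set e : (Fin m → ℤ) → ℕ → ℝ := fun τ j => exp (-(ε / 2) * wgt m n σ μ τ j)
  have he_le_one : ∀ τ j, e τ j ≤ 1 := fun τ j =>
    exp_le_one_iff.2 (by nlinarith [wgt_nonneg m n σ μ τ j])
  obtain ⟨u, hu, hu_eq⟩ := hGS.exists_eq_of_symbNorm_ne_zero
    (fun τ j => ((e τ j / symbNorm Q d lam τ j : ℝ) : ℂ)) fun r =>
      GSGrowth.of_norm_le one_pos fun τ j =>
        (norm_symb_mul_div_symbNorm_le Q d lam (exp_pos _).le r τ j).trans (he_le_one τ j)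
  obtain ⟨C, hC, hbound⟩ := hu (ε / 2) (half_pos hε)
  refine ⟨C⁻¹, inv_pos.2 hC, fun τ j hN => ?_⟩
  have hN_pos := (symbNorm_nonneg Q d lam τ j).lt_of_ne' hN
  have hu_bound := hbound τ j
  rw [hu_eq τ j hN, Complex.norm_real, Real.norm_of_nonneg (div_nonneg (exp_pos _).le
    hN_pos.le)] at hu_bound
  have := inv_mul_exp_le_of_exp_div_le hN_pos hC hu_bound
  rwa [mul_div_cancel₀ ε two_ne_zero] at this

/-- global solvability implies the Diophantine condition (DC). -/
theorem statement5 (m n ℓ : ℕ) (hm : 1 ≤ m) (hn : 1 ≤ n) (hℓ : 1 ≤ ℓ)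
    (σ μ : ℝ) (hσ : 1 ≤ σ) (hμ : 1 / 2 ≤ μ)
    (Q : Fin ℓ → MvPolynomial (Fin m) ℂ) (d : Fin ℓ → ℂ) (lam : ℕ → ℝ)
    (hGS : GloballySolvable m n ℓ σ μ Q d lam) :
    ∀ ε > 0, ∃ C > 0, ∀ τ j, symbNorm Q d lam τ j ≠ 0 →
      symbNorm Q d lam τ j ≥ C * Real.exp (-ε * wgt m n σ μ τ j) :=
  statement5_general m n ℓ σ μ Q d lam hGS
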